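/- Let A be a C*-algebra, f ∈ A*, and suppose the restriction of f to the closed unit ball A₁ is continuous with respect to the topology of convergence in norm of a_i x for each x ∈ A (so). Then the restriction of f to A₁ is continuous with respect to the topology on A₁ of pointwise convergence of ⟨a_i x, g⟩ for x ∈ A, g ∈ A* (wo). -/

import Mathlib

open TopologicalSpace

variable (A : Type*) [CStarAlgebra A]

/-- The so-topology on a C*-algebra `A`: the topology generated by the
seminorms `a ↦ ‖a x‖` for `x ∈ A`, i.e. the initial topology for the maps
`a ↦ a * x` into `A` with its norm topology. -/
noncomputable def soTop : TopologicalSpace A :=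
  ⨅ x : A, TopologicalSpace.induced (fun a : A => a * x) inferInstance

/-- The wo-topology on a C*-algebra `A`: the topology generated by the
seminorms `a ↦ |f (a x)|` for `x ∈ A`, `f ∈ A*`. -/
noncomputable def woTop : TopologicalSpace A :=
  ⨅ (x : A) (f : A →L[ℂ] ℂ),
    TopologicalSpace.induced (fun a : A => f (a * x)) inferInstance

/-- Auxiliary: a finite sum of continuous functions is continuous, for an explicitly
given domain topology. -/
theorem aux_sum_continuous {X M ι : Type*} [Fintype ι] (tX : TopologicalSpace X)
    [AddCommMonoid M] [TopologicalSpace M] [ContinuousAdd M] {f : ι → X → M}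
    (hf : ∀ i, @Continuous X M tX _ (f i)) :
    @Continuous X M tX _ (fun a => ∑ i, f i a) := by
  letI := tX
  exact continuous_finset_sum _ fun i _ => hf i

/-- Key approximation lemma: if `f` is so-continuous on the unit ball, then for every `ε > 0`
there is a wo-continuous function `φ` with `‖f a - φ a‖ ≤ ε` on the ball. -/
lemma exists_wo_continuous_approx {A : Type*} [CStarAlgebra A] (f : A →L[ℂ] ℂ)
    (h : @Continuous {a : A // ‖a‖ ≤ 1} ℂ
      (TopologicalSpace.induced Subtype.val (soTop A)) _ (fun a => f a.1))
    {ε : ℝ} (hε : 0 < ε) :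
    ∃ φ : A → ℂ, (@Continuous A ℂ (woTop A) _ φ) ∧
      ∀ a : A, ‖a‖ ≤ 1 → ‖f a - φ a‖ ≤ ε := by
  classical
  letI : TopologicalSpace {a : A // ‖a‖ ≤ 1} := induced Subtype.val (soTop A)
  set ε' : ℝ := ε / 2 with hε'def
  have hε' : 0 < ε' := by positivity
  -- Step 1: extract finitely many x's and δ's from continuity at 0.
  have h0 : ContinuousAt (fun a : {a : A // ‖a‖ ≤ 1} => f a.1)
      ⟨0, by simp⟩ := h.continuousAt
  have hball : (fun a : {a : A // ‖a‖ ≤ 1} => f a.1) ⁻¹' Metric.ball 0 ε' ∈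
      nhds (⟨0, by simp⟩ : {a : A // ‖a‖ ≤ 1}) := by
    apply h0.preimage_mem_nhds
    show Metric.ball (0 : ℂ) ε' ∈ nhds (f (0 : A))
    rw [map_zero]
    exact Metric.ball_mem_nhds 0 hε'
  rw [nhds_induced (T := soTop A) Subtype.val] at hball
  obtain ⟨V, hV, hVsub⟩ := Filter.mem_comap.1 hball
  have hVi : V ∈ ⨅ x : A, Filter.comap (fun a : A => a * x) (nhds 0) := by
    have hcoe : ((⟨0, by simp⟩ : {a : A // ‖a‖ ≤ 1}) : A) = 0 := rfl
    rw [hcoe] at hV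
    have e : @nhds A (soTop A) 0 = ⨅ x : A, Filter.comap (fun a : A => a * x) (nhds 0) := by
      rw [soTop, _root_.nhds_iInf]
      congr 1
      funext x
      rw [nhds_induced, zero_mul]
    rwa [e] at hV
  rw [Filter.mem_iInf] at hVi
  obtain ⟨I, hIfin, W, hW, rfl⟩ := hVi
  haveI : Fintype I := hIfin.fintype
  have hδex : ∀ i : I, ∃ δ : ℝ, 0 < δ ∧ ∀ a : A, ‖a * (i : A)‖ < δ → a ∈ W i := by
    intro i
    obtain ⟨U, hU, hUsub⟩ := Filter.mem_comap.1 (hW i)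
    obtain ⟨δ, hδpos, hδsub⟩ := Metric.mem_nhds_iff.1 hU
    exact ⟨δ, hδpos, fun a ha =>
      hUsub (Set.mem_preimage.2 (hδsub (by simpa [Metric.mem_ball, dist_zero_right] using ha)))⟩
  choose δ hδpos hδW using hδex
  have step1 : ∀ a : A, ‖a‖ ≤ 1 → (∀ i : I, ‖a * (i : A)‖ < δ i) → ‖f a‖ < ε' := by
    intro a ha hai
    have hmem : (⟨a, ha⟩ : {a : A // ‖a‖ ≤ 1}) ∈ Subtype.val ⁻¹' ⋂ i : I, W i := by
      simp only [Set.mem_preimage, Set.mem_iInter]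
      exact fun i => hδW i a (hai i)
    have := hVsub hmem
    simpa [Metric.mem_ball, dist_zero_right] using this
  -- The linear map into the product space.
  set c : I → ℝ := fun i => 2 * ε' / δ i with hcdef
  have hcpos : ∀ i, 0 < c i := fun i => by
    have := hδpos i
    positivity
  let Φ : A →ₗ[ℂ] A × (I → A) :=
    { toFun := fun a => (((ε' : ℝ) : ℂ) • a, fun i => ((c i : ℝ) : ℂ) • (a * (i : A)))
      map_add' := by
        intro a b
        refine Prod.ext (smul_add _ _ _) ?_
        funext i
        show ((c i : ℝ) : ℂ) • ((a + b) * (i : A)) = _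
        rw [add_mul, smul_add]
        rfl
      map_smul' := by
        intro r a
        refine Prod.ext ?_ ?_
        · show ((ε' : ℝ) : ℂ) • (r • a) = r • (((ε' : ℝ) : ℂ) • a)
          rw [smul_comm]
        · funext i
          show ((c i : ℝ) : ℂ) • ((r • a) * (i : A)) = r • (((c i : ℝ) : ℂ) • (a * (i : A)))
          rw [smul_mul_assoc, smul_comm] }
  -- The main estimate.
  have main : ∀ a : A, ‖f a‖ ≤ ε' * ‖a‖ + ‖(Φ a).2‖ := by
    intro a
    rcases eq_or_ne a 0 with rfl | ha0
    · simp only [map_zero, norm_zero]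
      positivity
    · set M : ℝ := ‖(Φ a).2‖ with hM
      have hM0 : 0 ≤ M := norm_nonneg _
      have hanorm : 0 < ‖a‖ := norm_pos_iff.2 ha0
      set t : ℝ := if M = 0 then ‖a‖⁻¹ else min ‖a‖⁻¹ (ε' / M) with htdef
      have ht0 : 0 < t := by
        rcases eq_or_ne M 0 with hMe | hMe
        · simp only [htdef, if_pos hMe]
          positivity
        · have hMpos : 0 < M := lt_of_le_of_ne hM0 (Ne.symm hMe)
          simp only [htdef, if_neg hMe]
          exact lt_min (by positivity) (by positivity)
      have hta : t * ‖a‖ ≤ 1 := by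
        have h1 : t ≤ ‖a‖⁻¹ := by
          rcases eq_or_ne M 0 with hMe | hMe
          · simp [htdef, hMe]
          · simp only [htdef, if_neg hMe]
            exact min_le_left _ _
        calc t * ‖a‖ ≤ ‖a‖⁻¹ * ‖a‖ := by gcongr
        _ = 1 := inv_mul_cancel₀ hanorm.ne'
      have htM : t * M ≤ ε' := by
        rcases eq_or_ne M 0 with hMe | hMe
        · simp [hMe]
          positivity
        · have hMpos : 0 < M := lt_of_le_of_ne hM0 (Ne.symm hMe)
          have h1 : t ≤ ε' / M := by
            simp only [htdef, if_neg hMe]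
            exact min_le_right _ _
          calc t * M ≤ (ε' / M) * M := by gcongr
          _ = ε' := div_mul_cancel₀ _ hMpos.ne'
      -- the scaled element
      have hΦsmul : Φ (((t : ℝ) : ℂ) • a) = ((t : ℝ) : ℂ) • Φ a := Φ.map_smul _ _
      have hsndnorm : ‖(Φ (((t : ℝ) : ℂ) • a)).2‖ = t * M := by
        rw [hΦsmul]
        show ‖((t : ℝ) : ℂ) • (Φ a).2‖ = t * M
        rw [norm_smul]
        simp [abs_of_pos ht0, hM]
      have hb1 : ‖((t : ℝ) : ℂ) • a‖ ≤ 1 := by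
        rw [norm_smul]
        simpa [abs_of_pos ht0] using hta
      have hbi : ∀ i : I, ‖(((t : ℝ) : ℂ) • a) * (i : A)‖ < δ i := by
        intro i
        have h2 : ‖(Φ (((t : ℝ) : ℂ) • a)).2 i‖ ≤ t * M := by
          rw [← hsndnorm]
          exact norm_le_pi_norm _ i
        have h3 : ‖(Φ (((t : ℝ) : ℂ) • a)).2 i‖
            = c i * ‖(((t : ℝ) : ℂ) • a) * (i : A)‖ := by
          show ‖((c i : ℝ) : ℂ) • ((((t : ℝ) : ℂ) • a) * (i : A))‖ = _
          rw [norm_smul]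
          simp [abs_of_pos (hcpos i)]
        rw [h3] at h2
        have hci := hcpos i
        have hδi := hδpos i
        have h4 : ‖(((t : ℝ) : ℂ) • a) * (i : A)‖ ≤ (t * M) / c i := by
          rw [le_div_iff₀ hci]
          linarith [h2]
        have h5 : (t * M) / c i ≤ ε' / c i := by gcongr
        have h6 : ε' / c i = δ i / 2 := by
          rw [hcdef]
          field_simp
        have h7 : δ i / 2 < δ i := by linarith
        linarith
      have hfb := step1 _ hb1 hbi
      have hfbe : ‖f (((t : ℝ) : ℂ) • a)‖ = t * ‖f a‖ := by
        rw [map_smul, norm_smul]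
        simp [abs_of_pos ht0]
      rw [hfbe] at hfb
      -- conclude
      have hinv : t⁻¹ ≤ ‖a‖ + M / ε' := by
        rcases eq_or_ne M 0 with hMe | hMe
        · simp only [htdef, if_pos hMe, inv_inv]
          have : M / ε' = 0 := by rw [hMe]; simp
          linarith
        · have hMpos : 0 < M := lt_of_le_of_ne hM0 (Ne.symm hMe)
          simp only [htdef, if_neg hMe]
          rcases min_cases (‖a‖⁻¹) (ε' / M) with ⟨he, _⟩ | ⟨he, _⟩
          · rw [he, inv_inv]
            have : 0 ≤ M / ε' := by positivity
            linarith
          · rw [he]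
            have h1 : (ε' / M)⁻¹ = M / ε' := by
              field_simp
            rw [h1]
            linarith
      have h8 : ‖f a‖ ≤ ε' * t⁻¹ := by
        rw [← div_eq_mul_inv, le_div_iff₀ ht0]
        nlinarith [hfb]
      calc ‖f a‖ ≤ ε' * t⁻¹ := h8
      _ ≤ ε' * (‖a‖ + M / ε') := by gcongr
      _ = ε' * ‖a‖ + M := by field_simp
  have hΦbound : ∀ a : A, ‖f a‖ ≤ 2 * ‖Φ a‖ := by
    intro a
    have h1 : ‖(Φ a).1‖ = ε' * ‖a‖ := by
      show ‖((ε' : ℝ) : ℂ) • a‖ = ε' * ‖a‖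
      rw [norm_smul]
      simp [abs_of_pos hε']
    calc ‖f a‖ ≤ ε' * ‖a‖ + ‖(Φ a).2‖ := main a
    _ = ‖(Φ a).1‖ + ‖(Φ a).2‖ := by rw [h1]
    _ ≤ ‖Φ a‖ + ‖Φ a‖ := by gcongr <;> [exact norm_fst_le _; exact norm_snd_le _]
    _ = 2 * ‖Φ a‖ := by ring
  -- Hahn-Banach extension
  have hε'ne : ((ε' : ℝ) : ℂ) ≠ 0 := by
    exact_mod_cast hε'.ne'
  let π : A × (I → A) →ₗ[ℂ] A := (((ε' : ℝ) : ℂ)⁻¹) • LinearMap.fst ℂ A (I → A)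
  let ψ : ↥(LinearMap.range Φ) →ₗ[ℂ] ℂ :=
    (f : A →ₗ[ℂ] ℂ).comp (π.comp (LinearMap.range Φ).subtype)
  have hψval : ∀ a : A, ∀ hz : Φ a ∈ LinearMap.range Φ, ψ ⟨Φ a, hz⟩ = f a := by
    intro a hz
    show f (((ε' : ℝ) : ℂ)⁻¹ • (Φ a).1) = f a
    show f (((ε' : ℝ) : ℂ)⁻¹ • (((ε' : ℝ) : ℂ) • a)) = f a
    rw [smul_smul, inv_mul_cancel₀ hε'ne, one_smul]
  have hψ : ∀ z : ↥(LinearMap.range Φ), ‖ψ z‖ ≤ 2 * ‖z‖ := by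
    rintro ⟨z, a, rfl⟩
    rw [hψval a ⟨a, rfl⟩]
    exact hΦbound a
  let ψc : ↥(LinearMap.range Φ) →L[ℂ] ℂ := LinearMap.mkContinuous ψ 2 hψ
  obtain ⟨g, hg, hgnorm⟩ := exists_extension_norm_eq (LinearMap.range Φ) ψc
  have hgle : ‖g‖ ≤ 2 := by
    rw [hgnorm]
    exact LinearMap.mkContinuous_norm_le _ (by norm_num) _
  have hgΦ : ∀ a : A, g (Φ a) = f a := by
    intro a
    have h1 := hg ⟨Φ a, LinearMap.mem_range_self Φ a⟩
    rw [h1]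
    show ψ _ = f a
    exact hψval a _
  -- the approximating functional
  let G : (I → A) →L[ℂ] ℂ := g.comp (ContinuousLinearMap.inr ℂ A (I → A))
  let φ : A → ℂ := fun a => G fun i => ((c i : ℝ) : ℂ) • (a * (i : A))
  refine ⟨φ, ?_, ?_⟩
  · -- wo-continuity
    let sgl : (i : I) → A →L[ℂ] (I → A) := fun i =>
      LinearMap.mkContinuous (LinearMap.single ℂ (fun _ : I => A) i) 1
        (fun y => by simp [Pi.norm_single])
    let H : I → (A →L[ℂ] ℂ) := fun i => ((c i : ℝ) : ℂ) • (G.comp (sgl i))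
    have hφeq : φ = fun a => ∑ i : I, H i (a * (i : A)) := by
      funext a
      have h1 : (fun i : I => ((c i : ℝ) : ℂ) • (a * (i : A)))
          = ∑ i : I, Pi.single i (((c i : ℝ) : ℂ) • (a * (i : A))) :=
        (Finset.univ_sum_single _).symm
      show G _ = _
      rw [h1, map_sum]
      refine Finset.sum_congr rfl fun i _ => ?_
      show G (Pi.single i (((c i : ℝ) : ℂ) • (a * (i : A)))) = ((c i : ℝ) : ℂ) • G (sgl i (a * (i : A)))
      have h2 : Pi.single i (((c i : ℝ) : ℂ) • (a * (i : A)))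
          = (((c i : ℝ) : ℂ) • (sgl i (a * (i : A))) : I → A) := by
        have hsgl : sgl i (a * (i : A)) = Pi.single i (a * (i : A)) := rfl
        rw [hsgl, Pi.single_smul]
      rw [h2, map_smul]
    rw [hφeq]
    show @Continuous A ℂ
      (⨅ (x : A) (f : A →L[ℂ] ℂ),
        TopologicalSpace.induced (fun a : A => f (a * x)) inferInstance) _ _
    refine aux_sum_continuous _ fun i => ?_
    exact continuous_iInf_dom (i := (i : A)) (continuous_iInf_dom (i := H i)
      continuous_induced_dom)
  · -- the approximation bound
    intro a ha
    have hdecomp : f a - φ a = g (((ε' : ℝ) : ℂ) • a, 0) := by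
      have h1 : Φ a = ((((ε' : ℝ) : ℂ) • a, 0) : A × (I → A))
          + ((0 : A), fun i : I => ((c i : ℝ) : ℂ) • (a * (i : A))) := by
        refine Prod.ext ?_ ?_
        · show ((ε' : ℝ) : ℂ) • a = ((ε' : ℝ) : ℂ) • a + 0
          rw [add_zero]
        · funext i
          show ((c i : ℝ) : ℂ) • (a * (i : A)) = 0 + ((c i : ℝ) : ℂ) • (a * (i : A))
          rw [zero_add]
      have h2 := hgΦ a
      rw [h1, map_add] at h2
      have h3 : g ((0 : A), fun i : I => ((c i : ℝ) : ℂ) • (a * (i : A))) = φ a := by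
        show _ = G _
        rfl
      rw [h3] at h2
      rw [← h2]
      ring
    rw [hdecomp]
    have h4 : ‖((((ε' : ℝ) : ℂ) • a, (0 : I → A)) : A × (I → A))‖ = ε' * ‖a‖ := by
      rw [Prod.norm_def]
      simp only [norm_zero, norm_smul, Complex.norm_real, Real.norm_eq_abs, abs_of_pos hε']
      exact max_eq_left (mul_nonneg hε'.le (norm_nonneg a))
    calc ‖g ((((ε' : ℝ) : ℂ) • a, (0 : I → A)))‖
        ≤ ‖g‖ * ‖((((ε' : ℝ) : ℂ) • a, (0 : I → A)) : A × (I → A))‖ := g.le_opNorm _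
    _ ≤ 2 * (ε' * ‖a‖) := by
        rw [h4]
        exact mul_le_mul_of_nonneg_right hgle (mul_nonneg hε'.le (norm_nonneg a))
    _ ≤ ε := by nlinarith
/-- If `f ∈ A*` restricted to the closed unit ball `A₁` is
so-continuous, then it is wo-continuous on `A₁`. -/
theorem so_continuous_to_wo_continuous {A : Type*} [CStarAlgebra A] (f : A →L[ℂ] ℂ)
    (h : @Continuous {a : A // ‖a‖ ≤ 1} ℂ
      (TopologicalSpace.induced Subtype.val (soTop A)) _ (fun a => f a.1)) :
    @Continuous {a : A // ‖a‖ ≤ 1} ℂ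
      (TopologicalSpace.induced Subtype.val (woTop A)) _ (fun a => f a.1) := by
  letI : TopologicalSpace {a : A // ‖a‖ ≤ 1} := induced Subtype.val (woTop A)
  rw [continuous_iff_continuousAt]
  intro b
  rw [ContinuousAt, Metric.tendsto_nhds]
  intro ε hε
  obtain ⟨φ, hφc, hφ⟩ := exists_wo_continuous_approx f h (ε := ε / 4) (by positivity)
  have hφc' : @Continuous {a : A // ‖a‖ ≤ 1} ℂ
      (induced Subtype.val (woTop A)) _ (fun a => φ a.1) :=
    @Continuous.comp {a : A // ‖a‖ ≤ 1} A ℂ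
      (induced Subtype.val (woTop A)) (woTop A) _ Subtype.val φ hφc
      (@continuous_induced_dom _ _ Subtype.val (woTop A))
  have hb := hφc'.continuousAt (x := b)
  rw [ContinuousAt, Metric.tendsto_nhds] at hb
  filter_upwards [hb (ε / 4) (by positivity)] with a haφ
  have h1 : ‖f a.1 - φ a.1‖ ≤ ε / 4 := hφ a.1 a.2
  have h2 : ‖f b.1 - φ b.1‖ ≤ ε / 4 := hφ b.1 b.2
  have h3 : dist (f a.1) (f b.1)
      ≤ ‖f a.1 - φ a.1‖ + ‖φ a.1 - φ b.1‖ + ‖φ b.1 - f b.1‖ := by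
    rw [dist_eq_norm]
    have : f a.1 - f b.1 = (f a.1 - φ a.1) + (φ a.1 - φ b.1) + (φ b.1 - f b.1) := by ring
    rw [this]
    exact norm_add₃_le
  have h4 : ‖φ b.1 - f b.1‖ = ‖f b.1 - φ b.1‖ := norm_sub_rev _ _
  rw [dist_eq_norm] at haφ
  rw [h4] at h3
  linarith
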